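/- arXiv:2312.10870 — 3 statements merged into one kernel-verified Lean document; each statement's English description precedes it below -/
import Mathlib

section
/- Let M be an Hadamard manifold and suppose G^{β*,ξ*}(p*) := E[ρ(X,p*;β*,ξ*)] < ∞ for some β* ∈ [0,1), ξ* ∈ ∂M, p* ∈ M. Then for every β ∈ [0,1) and ξ ∈ ∂M, the function G^{β,ξ}(p) = E[ρ(X,p;β,ξ)] is finite and continuous on all of M. -/
open MeasureTheory Filter Topology
open scoped RealInnerProductSpace

/-!
Since `dir ξ p` is a unit vector, `ρ(x,p;β,ξ)` lies between `(1-β) d(p,x)` and `(1+β) d(p,x)`.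
The lower bound at `(β*, ξ*, p*)` makes `d(p*, X)` integrable, hence `d(p, X)` for every `p`
by the triangle inequality, and the upper bound then gives integrability of `ρ(X,p;β,ξ)`.
Near `p₀` the integrand is dominated by `(1+β)(1 + d(p₀,X))`, so continuity follows from
dominated convergence.
-/

section InnerBounds

variable {E : Type*} [NormedAddCommGroup E] [InnerProductSpace ℝ E]
  {u v : E} {β : ℝ}

lemma abs_inner_smul_unit_le (hu : ‖u‖ = 1) (hβ : 0 ≤ β) : |⟪β • u, v⟫| ≤ β * ‖v‖ :=
  calc |⟪β • u, v⟫| ≤ ‖β • u‖ * ‖v‖ := abs_real_inner_le_norm _ _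
    _ = β * ‖v‖ := by rw [norm_smul, hu, Real.norm_of_nonneg hβ, mul_one]

lemma sub_mul_norm_le_norm_add_inner_smul (hu : ‖u‖ = 1) (hβ : 0 ≤ β) :
    (1 - β) * ‖v‖ ≤ ‖v‖ + ⟪β • u, v⟫ := by
  have := (abs_le.mp (abs_inner_smul_unit_le (v := v) hu hβ)).1
  linarith

lemma abs_norm_add_inner_smul_le (hu : ‖u‖ = 1) (hβ : 0 ≤ β) :
    |‖v‖ + ⟪β • u, v⟫| ≤ (1 + β) * ‖v‖ :=
  calc |‖v‖ + ⟪β • u, v⟫| ≤ |‖v‖| + |⟪β • u, v⟫| := abs_add_le _ _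
    _ ≤ ‖v‖ + β * ‖v‖ := by
      rw [abs_norm]; exact add_le_add_right (abs_inner_smul_unit_le hu hβ) _
    _ = (1 + β) * ‖v‖ := by ring

end InnerBounds

section DistIntegrals

variable {M : Type*} [PseudoMetricSpace M] [MeasurableSpace M] {μ : Measure M} [IsFiniteMeasure μ]

lemma integrable_dist_of_integrable_dist [OpensMeasurableSpace M] {p₀ : M}
    (h : Integrable (dist p₀) μ) (p : M) : Integrable (dist p) μ :=
  ((integrable_const (dist p p₀)).add h).mono'
    (continuous_const.dist continuous_id).aestronglyMeasurable
    (ae_of_all _ fun x => by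
      rw [Real.norm_of_nonneg dist_nonneg]; exact dist_triangle p p₀ x)

lemma continuous_integral_of_norm_le_mul_dist {G : Type*} [NormedAddCommGroup G]
    [NormedSpace ℝ G] {F : M → M → G} {C : ℝ} (hC : 0 ≤ C)
    (hF : ∀ p, AEStronglyMeasurable (F p) μ) (hcont : ∀ x, Continuous fun p => F p x)
    (hbound : ∀ p x, ‖F p x‖ ≤ C * dist p x) (hdist : ∀ p, Integrable (dist p) μ) :
    Continuous fun p => ∫ x, F p x ∂μ := by
  refine continuous_iff_continuousAt.mpr fun p₀ => continuousAt_of_dominated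
    (bound := fun x => C * (1 + dist p₀ x)) (Eventually.of_forall hF) ?_
    (((integrable_const 1).add (hdist p₀)).const_mul C)
    (ae_of_all _ fun x => (hcont x).continuousAt)
  filter_upwards [Metric.ball_mem_nhds p₀ one_pos] with p hp
  refine ae_of_all _ fun x => (hbound p x).trans (mul_le_mul_of_nonneg_left ?_ hC)
  linarith [dist_triangle p p₀ x, Metric.mem_ball.mp hp]

end DistIntegrals

/-- Let `M` be an Hadamard manifold (here: a metric space with a globally
defined inverse exponential map `log` satisfying `‖log_p x‖ = d(p,x)`, jointly continuous,
and with continuous unit radial fields `dir ξ : M → T M` indexed by the boundary points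
`ξ ∈ ∂M =: Ξ`).  Let `X` be an `M`-valued random element with law `μ`, and suppose
`G^{β*,ξ*}(p*) = E[ρ(X,p*;β*,ξ*)] < ∞` for some `β* ∈ [0,1)`, `ξ* ∈ Ξ`, `p* ∈ M`, where
`ρ(x,p;β,ξ) = ‖log_p x‖ + ⟪β·(dir ξ p), log_p x⟫`.  Then for every `β ∈ [0,1)` and
`ξ ∈ Ξ`, the function `G^{β,ξ}(p) = E[ρ(X,p;β,ξ)]` is finite (the integrand is
integrable) and continuous on all of `M`. -/
theorem quantile_objective_finite_continuous
    {M : Type*} [MetricSpace M] [MeasurableSpace M] [BorelSpace M]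
    {E : Type*} [NormedAddCommGroup E] [InnerProductSpace ℝ E]
    {Ξ : Type*} (log : M → M → E) (dir : Ξ → M → E)
    (hlog : Continuous fun q : M × M => log q.1 q.2)
    (hnorm : ∀ p x : M, ‖log p x‖ = dist p x)
    (hdir : ∀ ξ : Ξ, Continuous (dir ξ))
    (hdirunit : ∀ (ξ : Ξ) (p : M), ‖dir ξ p‖ = 1)
    (μ : Measure M) [IsProbabilityMeasure μ]
    (βs : ℝ) (hβs0 : 0 ≤ βs) (hβs1 : βs < 1) (ξs : Ξ) (ps : M)
    (hfin : Integrable (fun x => ‖log ps x‖ + ⟪βs • dir ξs ps, log ps x⟫) μ) :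
    ∀ β : ℝ, 0 ≤ β → β < 1 → ∀ ξ : Ξ,
      (∀ p : M, Integrable (fun x => ‖log p x‖ + ⟪β • dir ξ p, log p x⟫) μ) ∧
        Continuous fun p : M => ∫ x, (‖log p x‖ + ⟪β • dir ξ p, log p x⟫) ∂μ := by
  have hρ : ∀ (β : ℝ) (ξ : Ξ),
      Continuous fun q : M × M => ‖log q.1 q.2‖ + ⟪β • dir ξ q.1, log q.1 q.2⟫ :=
    fun β ξ => hlog.norm.add (((hdir ξ).comp continuous_fst).const_smul β |>.inner hlog)
  have hdist_ps : Integrable (dist ps) μ := by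
    refine (hfin.const_mul (1 - βs)⁻¹).mono'
      (continuous_const.dist continuous_id).aestronglyMeasurable (ae_of_all _ fun x => ?_)
    rw [Real.norm_of_nonneg dist_nonneg, le_inv_mul_iff₀ (by linarith), ← hnorm]
    exact sub_mul_norm_le_norm_add_inner_smul (hdirunit ξs ps) hβs0
  have hdist := integrable_dist_of_integrable_dist hdist_ps
  intro β hβ _ ξ
  have hbound : ∀ p x : M,
      ‖‖log p x‖ + ⟪β • dir ξ p, log p x⟫‖ ≤ (1 + β) * dist p x := fun p x => by
    rw [Real.norm_eq_abs, ← hnorm]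
    exact abs_norm_add_inner_smul_le (hdirunit ξ p) hβ
  have hmeas : ∀ p : M,
      AEStronglyMeasurable (fun x => ‖log p x‖ + ⟪β • dir ξ p, log p x⟫) μ := fun p =>
    ((hρ β ξ).comp (Continuous.prodMk_right p)).aestronglyMeasurable
  exact ⟨fun p => ((hdist p).const_mul _).mono' (hmeas p) (ae_of_all _ (hbound p)),
    continuous_integral_of_norm_le_mul_dist (by linarith) hmeas
      (fun x => (hρ β ξ).comp (Continuous.prodMk_left x)) hbound hdist⟩
end

section
/- Let M be an Hadamard manifold and X an M-valued random element with distribution of bounded support. If q minimizes p ↦ E[ρ(X,p;β,ξ)], then ‖E[∇ρ(X,q;β,ξ); X ≠ q] − P(X=q)·βξ_q‖ ≤ P(X=q). In particular, if P(X=q)=0 then E[∇ρ(X,q;β,ξ); X ≠ q] = 0. -/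
open Filter MeasureTheory
open scoped RealInnerProductSpace Topology

/-! Perturb the minimizer `q` along the geodesic `γ_h` in a unit direction `h`. The mean
difference quotient of the loss is nonnegative, and by dominated convergence it tends to the
one-sided directional derivative of `p ↦ E[ρ(X,p)]`, namely
`⟪E[∇ρ(X,q); X ≠ q], h⟫ + P(X = q) (1 - ⟪βξ_q, h⟫)`, where the atom at `q` contributes the
directional derivative of `‖log_p q‖`. Nonnegativity of this quantity for every unit `h` is
the asserted norm bound, by testing against `h` parallel to
`-(E[∇ρ(X,q); X ≠ q] - P(X = q) βξ_q)`. -/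

theorem norm_le_of_forall_norm_eq_one_neg_le_inner {F : Type*} [NormedAddCommGroup F]
    [InnerProductSpace ℝ F] {v : F} {m : ℝ} (hm : 0 ≤ m)
    (h : ∀ u : F, ‖u‖ = 1 → -m ≤ ⟪v, u⟫) : ‖v‖ ≤ m := by
  rcases eq_or_ne v 0 with rfl | hv
  · simpa using hm
  have hv' : ‖v‖ ≠ 0 := norm_ne_zero_iff.mpr hv
  have hunit : ‖-(‖v‖⁻¹ • v)‖ = 1 := by
    rw [norm_neg, norm_smul, norm_inv, norm_norm, inv_mul_cancel₀ hv']
  have hinner : ⟪v, -(‖v‖⁻¹ • v)⟫ = -‖v‖ := by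
    rw [inner_neg_right, real_inner_smul_right, real_inner_self_eq_norm_sq]
    field_simp
  linarith [hinner ▸ h _ hunit]

section Integral

variable {α : Type*} [MeasurableSpace α] {μ : Measure α}

theorem integrable_update_of_integrableOn_compl_singleton [MeasurableSingletonClass α]
    [DecidableEq α] [IsFiniteMeasure μ] {g : α → ℝ} {a : α} (hg : IntegrableOn g {a}ᶜ μ) (c : ℝ) :
    Integrable (Function.update g a c) μ := by
  have hcompl : IntegrableOn (Function.update g a c) {a}ᶜ μ :=
    hg.congr_fun (fun x hx => (Function.update_of_ne hx c g).symm)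
      (measurableSet_singleton a).compl
  have hsingleton : IntegrableOn (Function.update g a c) {a} μ :=
    (integrableOn_const (measure_ne_top μ _)).congr_fun
      (fun x hx => by rw [Set.mem_singleton_iff.mp hx, Function.update_self])
      (measurableSet_singleton a)
  rw [← integrableOn_univ, ← Set.compl_union_self {a}]
  exact hcompl.union hsingleton

theorem integral_update_eq_setIntegral_compl_singleton_add [MeasurableSingletonClass α]
    [DecidableEq α] [IsFiniteMeasure μ] {g : α → ℝ} {a : α} (hg : IntegrableOn g {a}ᶜ μ) (c : ℝ) :
    ∫ x, Function.update g a c x ∂μ = ∫ x in {a}ᶜ, g x ∂μ + μ.real {a} * c := by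
  have hs : MeasurableSet ({a} : Set α) := measurableSet_singleton a
  rw [← integral_add_compl hs (integrable_update_of_integrableOn_compl_singleton hg c),
    add_comm, setIntegral_congr_fun hs.compl (g := g)
      (fun x hx => Function.update_of_ne hx c g),
    setIntegral_congr_fun hs (g := fun _ => c)
      (fun x hx => by rw [Set.mem_singleton_iff.mp hx, Function.update_self]),
    setIntegral_const, smul_eq_mul]

theorem integral_nonneg_of_tendsto_diffQuot [IsFiniteMeasure μ] {φ₀ f : α → ℝ}
    {φ : ℝ → α → ℝ} {C : ℝ} (hφ₀ : Integrable φ₀ μ) (hφ : ∀ t, Integrable (φ t) μ)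
    (hmin : ∀ t > 0, ∫ x, φ₀ x ∂μ ≤ ∫ x, φ t x ∂μ)
    (hbound : ∀ᵐ x ∂μ, ∀ t ∈ Set.Ioc (0 : ℝ) 1, |φ t x - φ₀ x| / t ≤ C)
    (hlim : ∀ x, Tendsto (fun t => (φ t x - φ₀ x) / t) (𝓝[>] 0) (𝓝 (f x))) :
    0 ≤ ∫ x, f x ∂μ := by
  have hconv : Tendsto (fun t => ∫ x, (φ t x - φ₀ x) / t ∂μ) (𝓝[>] 0) (𝓝 (∫ x, f x ∂μ)) := by
    refine tendsto_integral_filter_of_dominated_convergence (fun _ => C)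
      (Eventually.of_forall fun t => (((hφ t).sub hφ₀).div_const t).aestronglyMeasurable)
      ?_ (integrable_const C) (Eventually.of_forall hlim)
    filter_upwards [Ioc_mem_nhdsGT zero_lt_one] with t ht
    filter_upwards [hbound] with x hx
    rw [Real.norm_eq_abs, abs_div, abs_of_pos ht.1]
    exact hx t ht
  refine ge_of_tendsto hconv ?_
  filter_upwards [self_mem_nhdsWithin] with t (ht : 0 < t)
  rw [integral_div, integral_sub (hφ t) hφ₀]
  exact div_nonneg (sub_nonneg.mpr (hmin t ht)) ht.le

end Integral

theorem gradient_condition_at_quantile_general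
    {M : Type*} [MetricSpace M] [MeasurableSpace M] [BorelSpace M]
    {E : Type*} [NormedAddCommGroup E] [InnerProductSpace ℝ E] [CompleteSpace E]
    (μ : Measure M) [IsProbabilityMeasure μ]
    (ρ : M → M → ℝ) (gradρ : M → E) (q : M)
    (β : ℝ) (ξq : E)
    (γ : E → ℝ → M)
    (hderiv : ∀ h : E, ‖h‖ = 1 → ∀ x : M, x ≠ q →
      Tendsto (fun t : ℝ => (ρ x (γ h t) - ρ x q) / t)
        (nhdsWithin 0 (Set.Ioi 0)) (nhds ⟪gradρ x, h⟫))
    (hderivq : ∀ h : E, ‖h‖ = 1 →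
      Tendsto (fun t : ℝ => (ρ q (γ h t) - ρ q q) / t)
        (nhdsWithin 0 (Set.Ioi 0)) (nhds (1 - ⟪β • ξq, h⟫)))
    (hdom : ∃ C : ℝ, ∀ h : E, ‖h‖ = 1 →
      ∀ᵐ x ∂μ, ∀ t ∈ Set.Ioc (0 : ℝ) 1, |ρ x (γ h t) - ρ x q| / t ≤ C)
    (hint : ∀ p : M, Integrable (fun x => ρ x p) μ)
    (hgradint : IntegrableOn gradρ {x : M | x ≠ q} μ)
    (hmin : ∀ p : M, ∫ x, ρ x q ∂μ ≤ ∫ x, ρ x p ∂μ) :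
    ‖(∫ x in {x : M | x ≠ q}, gradρ x ∂μ) - (μ {q}).toReal • (β • ξq)‖ ≤ (μ {q}).toReal ∧
      (μ {q} = 0 → (∫ x in {x : M | x ≠ q}, gradρ x ∂μ) = 0) := by
  classical
  obtain ⟨C, hC⟩ := hdom
  set I := ∫ x in {x : M | x ≠ q}, gradρ x ∂μ
  have hdirectional : ∀ h : E, ‖h‖ = 1 → -μ.real {q} ≤ ⟪I - μ.real {q} • (β • ξq), h⟫ := by
    intro h hh
    have hgrad_h : IntegrableOn (fun x => ⟪h, gradρ x⟫) {q}ᶜ μ := hgradint.const_inner h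
    have hnonneg := integral_nonneg_of_tendsto_diffQuot (hint q) (fun t => hint (γ h t))
      (fun t _ => hmin (γ h t)) (hC h hh)
      (f := Function.update (fun x => ⟪h, gradρ x⟫) q (1 - ⟪β • ξq, h⟫)) fun x => by
        rcases eq_or_ne x q with rfl | hx
        · simpa using hderivq h hh
        · simpa [hx, real_inner_comm] using hderiv h hh x hx
    rw [integral_update_eq_setIntegral_compl_singleton_add hgrad_h, Set.compl_singleton_eq,
      integral_inner hgradint, real_inner_comm] at hnonneg
    rw [inner_sub_left, real_inner_smul_left]
    linarith
  have hnorm := norm_le_of_forall_norm_eq_one_neg_le_inner measureReal_nonneg hdirectional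
  refine ⟨hnorm, fun hq => ?_⟩
  simpa [Measure.real, hq] using hnorm

/-- Let `M` be an Hadamard manifold and `X` an `M`-valued random element
whose law `μ` has bounded (compact) support.  Let `ρ(x,p) = ρ(x,p;β,ξ)` be the quantile
loss, `gradρ x = ∇ρ(x,q;β,ξ) ∈ T_qM ≅ E` its Riemannian gradient in the second argument
at the point `q` (for `x ≠ q`), characterized through geodesics `γ_h(t) = exp_q(t h)` by
the one-sided directional derivatives `lim_{t→0+} (ρ(x,γ_h(t)) − ρ(x,q))/t = ⟪gradρ x, h⟫`
for `x ≠ q` and `= 1 − ⟪β ξ_q, h⟫` for `x = q`, with uniformly bounded difference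
quotients (bounded support).  If `q` minimizes `p ↦ E[ρ(X,p)]`, then
`‖E[∇ρ(X,q); X ≠ q] − P(X = q)·β ξ_q‖ ≤ P(X = q)`; in particular if `P(X = q) = 0` then
`E[∇ρ(X,q); X ≠ q] = 0`. -/
theorem gradient_condition_at_quantile
    {M : Type*} [MetricSpace M] [MeasurableSpace M] [BorelSpace M]
    {E : Type*} [NormedAddCommGroup E] [InnerProductSpace ℝ E] [CompleteSpace E]
    (μ : Measure M) [IsProbabilityMeasure μ]
    (hsupp : ∃ K : Set M, IsCompact K ∧ μ Kᶜ = 0)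
    (ρ : M → M → ℝ) (gradρ : M → E) (q : M)
    (β : ℝ) (hβ0 : 0 ≤ β) (hβ1 : β < 1) (ξq : E) (hξq : ‖ξq‖ = 1)
    (γ : E → ℝ → M) (hγ0 : ∀ h : E, γ h 0 = q)
    (hρqq : ρ q q = 0)
    (hderiv : ∀ h : E, ‖h‖ = 1 → ∀ x : M, x ≠ q →
      Tendsto (fun t : ℝ => (ρ x (γ h t) - ρ x q) / t)
        (nhdsWithin 0 (Set.Ioi 0)) (nhds ⟪gradρ x, h⟫))
    (hderivq : ∀ h : E, ‖h‖ = 1 →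
      Tendsto (fun t : ℝ => (ρ q (γ h t) - ρ q q) / t)
        (nhdsWithin 0 (Set.Ioi 0)) (nhds (1 - ⟪β • ξq, h⟫)))
    (hdom : ∃ C : ℝ, ∀ h : E, ‖h‖ = 1 →
      ∀ᵐ x ∂μ, ∀ t ∈ Set.Ioc (0 : ℝ) 1, |ρ x (γ h t) - ρ x q| / t ≤ C)
    (hint : ∀ p : M, Integrable (fun x => ρ x p) μ)
    (hgradint : IntegrableOn gradρ {x : M | x ≠ q} μ)
    (hmin : ∀ p : M, ∫ x, ρ x q ∂μ ≤ ∫ x, ρ x p ∂μ) :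
    ‖(∫ x in {x : M | x ≠ q}, gradρ x ∂μ) - (μ {q}).toReal • (β • ξq)‖ ≤ (μ {q}).toReal ∧
      (μ {q} = 0 → (∫ x in {x : M | x ≠ q}, gradρ x ∂μ) = 0) :=
  gradient_condition_at_quantile_general μ ρ gradρ q β ξq γ hderiv hderivq hdom hint hgradint hmin
end

section
/- Let M be an Hadamard manifold and X₁, X₂, … i.i.d. M-valued. If X₁ has a unique (β,ξ)-quantile q, then any measurable choice q̂_N from the sample (β,ξ)-quantile set argmin_p N^{-1}Σ_i ρ(X_i,p;β,ξ) converges almost surely to q as N → ∞. -/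
/-!
Since `ρ(x, p) ≥ (1 - β) d(p, x)`, the sample objective satisfies
`Ĝ_N(p) ≥ (1 - β) N d(p, q) - Ĝ_N(q)`, so by the strong law for `ρ(·, q)` the minimisers
eventually stay in a fixed closed ball `B` about `q`. On the compact set `B \ ball(q, ε)` we run
Wald's argument: by dominated convergence each `p` has a closed ball whose lower envelope
`x ↦ inf_{p'} ρ(x, p')` still has mean above `G(q)`; finitely many such balls cover the set, and the
strong law for their envelopes shows that eventually `Ĝ_N > Ĝ_N(q)` on all of it.
-/

open Filter MeasureTheory
open scoped RealInnerProductSpace BigOperators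

open ProbabilityTheory Metric Topology

section StrongLaw

variable {S Ω : Type*} [MeasurableSpace S] [MeasurableSpace Ω] {P : Measure Ω} {μ : Measure S}
  {X : ℕ → Ω → S}

theorem ae_tendsto_sum_comp_div (hX : ∀ i, Measurable (X i)) (hident : ∀ i, P.map (X i) = μ)
    (hindep : iIndepFun X P) {f : S → ℝ} (hf : Measurable f) (hint : Integrable f μ) :
    ∀ᵐ ω ∂P, Tendsto (fun N : ℕ => (∑ i ∈ Finset.range N, f (X i ω)) / N) atTop
      (𝓝 (∫ x, f x ∂μ)) := by
  have hident' : ∀ i, IdentDistrib (fun ω => f (X i ω)) (fun ω => f (X 0 ω)) P P := fun i =>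
    (IdentDistrib.mk (hX i).aemeasurable (hX 0).aemeasurable (by rw [hident, hident])).comp hf
  have hint0 : Integrable (fun ω => f (X 0 ω)) P :=
    (integrable_map_measure hf.aestronglyMeasurable (hX 0).aemeasurable).mp (hident 0 ▸ hint)
  have hmean : P[fun ω => f (X 0 ω)] = ∫ x, f x ∂μ := by
    rw [← hident 0, integral_map (hX 0).aemeasurable hf.aestronglyMeasurable]
  simpa only [hmean] using strong_law_ae_real (fun i ω => f (X i ω)) hint0
    (fun i j hij => (hindep.indepFun hij).comp hf hf) hident'

end StrongLaw

section LowerEnvelope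

variable {Θ S : Type*} [MetricSpace Θ]

/-- For `δ < 0` the ball is empty and the envelope is the junk value `sInf ∅ = 0`. -/
noncomputable def lowerEnvelope (f : Θ → S → ℝ) (p : Θ) (δ : ℝ) (x : S) : ℝ :=
  sInf ((f · x) '' closedBall p δ)

variable {f : Θ → S → ℝ}

theorem lowerEnvelope_nonneg (hf0 : ∀ p x, 0 ≤ f p x) (p : Θ) (δ : ℝ) (x : S) :
    0 ≤ lowerEnvelope f p δ x :=
  Real.sInf_nonneg <| by rintro _ ⟨p', -, rfl⟩; exact hf0 p' x

variable [ProperSpace Θ]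

theorem lowerEnvelope_le {x : S} (hf : Continuous (f · x)) {p p' : Θ} {δ : ℝ}
    (hp' : p' ∈ closedBall p δ) : lowerEnvelope f p δ x ≤ f p' x :=
  csInf_le ((isCompact_closedBall p δ).bddBelow_image hf.continuousOn) ⟨p', hp', rfl⟩

theorem tendsto_lowerEnvelope {x : S} (hf : Continuous (f · x)) (p : Θ) :
    Tendsto (fun δ => lowerEnvelope f p δ x) (𝓝[>] 0) (𝓝 (f p x)) := by
  rw [tendsto_order]
  refine ⟨fun a ha => ?_, fun b hb => ?_⟩
  · obtain ⟨a', haa', ha'⟩ := exists_between ha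
    obtain ⟨η, hη, hball⟩ := Metric.mem_nhds_iff.mp
      ((isOpen_lt continuous_const hf).mem_nhds ha' : {p' | a' < f p' x} ∈ 𝓝 p)
    filter_upwards [Ioo_mem_nhdsGT hη] with δ hδ
    refine haa'.trans_le (le_csInf ⟨f p x, p, mem_closedBall_self hδ.1.le, rfl⟩ ?_)
    rintro _ ⟨p', hp', rfl⟩
    exact (hball ((mem_closedBall.mp hp').trans_lt hδ.2)).le
  · filter_upwards [self_mem_nhdsWithin] with δ hδ
    exact (lowerEnvelope_le hf (mem_closedBall_self (le_of_lt hδ))).trans_lt hb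

variable [TopologicalSpace S]

theorem continuous_lowerEnvelope (hf : Continuous (Function.uncurry f)) (p : Θ) (δ : ℝ) :
    Continuous (lowerEnvelope f p δ) :=
  (isCompact_closedBall p δ).continuous_sInf (f := fun x p => f p x)
    (hf.comp continuous_swap)

variable [MeasurableSpace S] [OpensMeasurableSpace S] {μ : Measure S}

theorem integrable_lowerEnvelope (hf : Continuous (Function.uncurry f))
    (hf0 : ∀ p x, 0 ≤ f p x) {p : Θ} (hint : Integrable (f p) μ) {δ : ℝ} (hδ : 0 ≤ δ) :
    Integrable (lowerEnvelope f p δ) μ :=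
  hint.mono' (continuous_lowerEnvelope hf p δ).aestronglyMeasurable <| .of_forall fun x => by
    rw [Real.norm_of_nonneg (lowerEnvelope_nonneg hf0 p δ x)]
    exact lowerEnvelope_le (hf.uncurry_right x) (mem_closedBall_self hδ)

theorem exists_lt_integral_lowerEnvelope (hf : Continuous (Function.uncurry f))
    (hf0 : ∀ p x, 0 ≤ f p x) {p : Θ} (hint : Integrable (f p) μ) {c : ℝ}
    (hc : c < ∫ x, f p x ∂μ) : ∃ δ > 0, c < ∫ x, lowerEnvelope f p δ x ∂μ := by
  have hlim : Tendsto (fun δ => ∫ x, lowerEnvelope f p δ x ∂μ) (𝓝[>] 0)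
      (𝓝 (∫ x, f p x ∂μ)) := by
    refine tendsto_integral_filter_of_dominated_convergence (f p)
      (.of_forall fun δ => (continuous_lowerEnvelope hf p δ).aestronglyMeasurable) ?_ hint
      (.of_forall fun x => tendsto_lowerEnvelope (hf.uncurry_right x) p)
    filter_upwards [self_mem_nhdsWithin] with δ hδ
    refine .of_forall fun x => ?_
    rw [Real.norm_of_nonneg (lowerEnvelope_nonneg hf0 p δ x)]
    exact lowerEnvelope_le (hf.uncurry_right x) (mem_closedBall_self (le_of_lt hδ))
  exact ((hlim.eventually (lt_mem_nhds hc)).and self_mem_nhdsWithin).exists.imp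
    fun δ h => ⟨h.2, h.1⟩

end LowerEnvelope

section Consistency

variable {Θ S : Type*} [MetricSpace Θ] {f : Θ → S → ℝ}

theorem eventually_dist_le_of_tendsto {c : ℝ} (hc : 0 < c) {q : Θ}
    (hcoer : ∀ p x, c * dist p q ≤ f p x + f q x) {x : ℕ → S} {y : ℕ → Θ}
    (hmin : ∀ N, ∑ i ∈ Finset.range N, f (y N) (x i) ≤ ∑ i ∈ Finset.range N, f q (x i))
    {G : ℝ} (hG : Tendsto (fun N : ℕ => (∑ i ∈ Finset.range N, f q (x i)) / N) atTop (𝓝 G)) :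
    ∀ᶠ N in atTop, dist (y N) q ≤ 2 * (G + 1) / c := by
  filter_upwards [hG.eventually_lt_const (lt_add_one G), eventually_gt_atTop 0] with N hN hN0
  have hN0' : (0 : ℝ) < N := by exact_mod_cast hN0
  have hsum : N * (c * dist (y N) q) ≤ 2 * ∑ i ∈ Finset.range N, f q (x i) :=
    calc N * (c * dist (y N) q)
        ≤ ∑ i ∈ Finset.range N, (f (y N) (x i) + f q (x i)) := by
          simpa using Finset.sum_le_sum fun i (_ : i ∈ Finset.range N) => hcoer (y N) (x i)
      _ ≤ 2 * ∑ i ∈ Finset.range N, f q (x i) := by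
          rw [Finset.sum_add_distrib]; linarith [hmin N]
  rw [div_lt_iff₀ hN0'] at hN
  rw [le_div_iff₀ hc]
  nlinarith

variable {Ω : Type*} [ProperSpace Θ] [TopologicalSpace S] [MeasurableSpace S]
  [OpensMeasurableSpace S] [MeasurableSpace Ω] {P : Measure Ω} {μ : Measure S} {X : ℕ → Ω → S}

/-- Wald's argument: finitely many lower envelopes, each with mean above `∫ f q`, control all
of `K` at once. -/
theorem ae_eventually_sum_lt_sum_of_isCompact (hX : ∀ i, Measurable (X i))
    (hident : ∀ i, P.map (X i) = μ) (hindep : iIndepFun X P)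
    (hf : Continuous (Function.uncurry f)) (hf0 : ∀ p x, 0 ≤ f p x)
    (hint : ∀ p, Integrable (f p) μ) {q : Θ} {K : Set Θ} (hK : IsCompact K)
    (hlt : ∀ p ∈ K, ∫ x, f q x ∂μ < ∫ x, f p x ∂μ) :
    ∀ᵐ ω ∂P, ∀ᶠ N in atTop, ∀ p ∈ K,
      ∑ i ∈ Finset.range N, f q (X i ω) < ∑ i ∈ Finset.range N, f p (X i ω) := by
  choose! δ hδ hδlt using fun p hp =>
    exists_lt_integral_lowerEnvelope hf hf0 (hint p) (hlt p hp)
  obtain ⟨T, hTK, hKT⟩ :=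
    hK.elim_nhds_subcover (fun p => ball p (δ p)) fun p hp => ball_mem_nhds p (hδ p hp)
  have hq := ae_tendsto_sum_comp_div hX hident hindep (hf.uncurry_left q).measurable (hint q)
  have henv : ∀ᵐ ω ∂P, ∀ p ∈ T, Tendsto
      (fun N : ℕ => (∑ i ∈ Finset.range N, lowerEnvelope f p (δ p) (X i ω)) / N) atTop
      (𝓝 (∫ x, lowerEnvelope f p (δ p) x ∂μ)) :=
    (eventually_all_finset T).mpr fun p hp => ae_tendsto_sum_comp_div hX hident hindep
      (continuous_lowerEnvelope hf p _).measurable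
      (integrable_lowerEnvelope hf hf0 (hint p) (hδ p (hTK p hp)).le)
  filter_upwards [hq, henv] with ω hqω henvω
  have hsum : ∀ᶠ N in atTop, ∀ p ∈ T, ∑ i ∈ Finset.range N, f q (X i ω) <
      ∑ i ∈ Finset.range N, lowerEnvelope f p (δ p) (X i ω) := by
    refine (eventually_all_finset T).mpr fun p hp => ?_
    filter_upwards [hqω.eventually_lt (henvω p hp) (hδlt p (hTK p hp)), eventually_gt_atTop 0]
      with N hN hN0
    exact (div_lt_div_iff_of_pos_right (by exact_mod_cast hN0)).mp hN
  filter_upwards [hsum] with N hN p' hp'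
  obtain ⟨p, hpT, hp'p⟩ : ∃ p ∈ T, p' ∈ ball p (δ p) := by simpa using hKT hp'
  exact (hN p hpT).trans_le <| Finset.sum_le_sum fun i _ =>
    lowerEnvelope_le (hf.uncurry_right _) (ball_subset_closedBall hp'p)

theorem ae_tendsto_of_forall_sum_le (hX : ∀ i, Measurable (X i))
    (hident : ∀ i, P.map (X i) = μ) (hindep : iIndepFun X P)
    (hf : Continuous (Function.uncurry f)) (hf0 : ∀ p x, 0 ≤ f p x)
    (hint : ∀ p, Integrable (f p) μ) {q : Θ}
    (hq : ∀ p, p ≠ q → ∫ x, f q x ∂μ < ∫ x, f p x ∂μ) {c : ℝ} (hc : 0 < c)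
    (hcoer : ∀ p x, c * dist p q ≤ f p x + f q x) {qhat : ℕ → Ω → Θ}
    (hmin : ∀ N ω p, ∑ i ∈ Finset.range N, f (qhat N ω) (X i ω) ≤
      ∑ i ∈ Finset.range N, f p (X i ω)) :
    ∀ᵐ ω ∂P, Tendsto (fun N => qhat N ω) atTop (𝓝 q) := by
  set R := 2 * (∫ x, f q x ∂μ + 1) / c
  have hsep : ∀ m : ℕ, ∀ᵐ ω ∂P, ∀ᶠ N in atTop, ∀ p ∈ closedBall q R \ ball q (1 / (m + 1)),
      ∑ i ∈ Finset.range N, f q (X i ω) < ∑ i ∈ Finset.range N, f p (X i ω) := fun m =>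
    ae_eventually_sum_lt_sum_of_isCompact hX hident hindep hf hf0 hint
      ((isCompact_closedBall q R).diff isOpen_ball) fun p hp =>
        hq p fun h => hp.2 (h ▸ mem_ball_self (by positivity))
  rw [← ae_all_iff] at hsep
  filter_upwards [ae_tendsto_sum_comp_div hX hident hindep (hf.uncurry_left q).measurable (hint q),
    hsep] with ω hqω hsepω
  rw [nhds_basis_ball_inv_nat_succ.tendsto_right_iff]
  intro m _
  filter_upwards [eventually_dist_le_of_tendsto hc hcoer (fun N => hmin N ω q) hqω, hsepω m]
    with N hR hm
  by_contra hball
  exact (hm _ ⟨mem_closedBall.mpr hR, hball⟩).not_ge (hmin N ω q)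

end Consistency

section QuantileLoss

variable {M E Ξ : Type*} [MetricSpace M] [NormedAddCommGroup E] [InnerProductSpace ℝ E]
  {log : M → M → E} {dir : Ξ → M → E} {β : ℝ} {ξ : Ξ}

/-- `ρ(x, p; β, ξ)`, with the base point `p` as first argument. -/
def quantileLoss (log : M → M → E) (dir : Ξ → M → E) (β : ℝ) (ξ : Ξ) (p x : M) : ℝ :=
  ‖log p x‖ + ⟪β • dir ξ p, log p x⟫

theorem continuous_quantileLoss (hlog : Continuous fun q : M × M => log q.1 q.2)
    (hdir : Continuous (dir ξ)) : Continuous (Function.uncurry (quantileLoss log dir β ξ)) :=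
  hlog.norm.add (((hdir.comp continuous_fst).const_smul β).inner hlog)

variable (hnorm : ∀ p x : M, ‖log p x‖ = dist p x) (hdirunit : ∀ (ξ' : Ξ) (p : M), ‖dir ξ' p‖ = 1)
include hnorm hdirunit

theorem abs_inner_smul_dir_le (hβ : 0 ≤ β) (p x : M) :
    |⟪β • dir ξ p, log p x⟫| ≤ β * dist p x :=
  (abs_real_inner_le_norm _ _).trans_eq <| by
    rw [norm_smul, hdirunit, hnorm, Real.norm_of_nonneg hβ, mul_one]

theorem mul_dist_le_quantileLoss (hβ : 0 ≤ β) (p x : M) :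
    (1 - β) * dist p x ≤ quantileLoss log dir β ξ p x := by
  have := neg_abs_le ⟪β • dir ξ p, log p x⟫
  have := abs_inner_smul_dir_le hnorm hdirunit (ξ := ξ) hβ p x
  rw [quantileLoss, hnorm]
  linarith

theorem quantileLoss_le (hβ : 0 ≤ β) (p x : M) :
    quantileLoss log dir β ξ p x ≤ (1 + β) * dist p x := by
  have := le_abs_self ⟪β • dir ξ p, log p x⟫
  have := abs_inner_smul_dir_le hnorm hdirunit (ξ := ξ) hβ p x
  rw [quantileLoss, hnorm]
  linarith

theorem quantileLoss_nonneg (hβ0 : 0 ≤ β) (hβ1 : β ≤ 1) (p x : M) :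
    0 ≤ quantileLoss log dir β ξ p x :=
  (mul_nonneg (sub_nonneg.mpr hβ1) dist_nonneg).trans
    (mul_dist_le_quantileLoss hnorm hdirunit hβ0 p x)

theorem mul_dist_le_quantileLoss_add (hβ0 : 0 ≤ β) (hβ1 : β ≤ 1) (p q x : M) :
    (1 - β) * dist p q ≤ quantileLoss log dir β ξ p x + quantileLoss log dir β ξ q x :=
  calc (1 - β) * dist p q ≤ (1 - β) * dist p x + (1 - β) * dist q x := by
        rw [← mul_add]
        exact mul_le_mul_of_nonneg_left (dist_triangle_right p q x) (sub_nonneg.mpr hβ1)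
    _ ≤ _ := add_le_add (mul_dist_le_quantileLoss hnorm hdirunit hβ0 p x)
        (mul_dist_le_quantileLoss hnorm hdirunit hβ0 q x)

variable [MeasurableSpace M] [BorelSpace M] {μ : Measure M}

theorem integrable_dist_of_integrable_quantileLoss [IsFiniteMeasure μ] (hβ0 : 0 ≤ β)
    (hβ1 : β < 1) {p₀ : M} (hint : Integrable (quantileLoss log dir β ξ p₀) μ) (p : M) :
    Integrable (dist p) μ := by
  have hdist : Integrable (dist p₀) μ :=
    (hint.const_mul (1 - β)⁻¹).mono' (continuous_const.dist continuous_id).aestronglyMeasurable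
      (.of_forall fun x => by
        rw [Real.norm_of_nonneg dist_nonneg, le_inv_mul_iff₀ (sub_pos.mpr hβ1)]
        exact mul_dist_le_quantileLoss hnorm hdirunit hβ0 p₀ x)
  exact ((integrable_const (dist p p₀)).add hdist).mono'
    (continuous_const.dist continuous_id).aestronglyMeasurable
    (.of_forall fun x => by
      rw [Real.norm_of_nonneg dist_nonneg]
      exact dist_triangle p p₀ x)

theorem integrable_quantileLoss (hβ0 : 0 ≤ β) (hlog : Continuous fun q : M × M => log q.1 q.2)
    (hdir : Continuous (dir ξ)) {p : M} (hint : Integrable (dist p) μ) :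
    Integrable (quantileLoss log dir β ξ p) μ :=
  (hint.const_mul (1 + β)).mono'
    ((continuous_quantileLoss hlog hdir).uncurry_left p).aestronglyMeasurable
    (.of_forall fun x => abs_le.mpr ⟨by
      linarith [mul_dist_le_quantileLoss hnorm hdirunit (ξ := ξ) hβ0 p x,
        dist_nonneg (x := p) (y := x)],
      quantileLoss_le hnorm hdirunit hβ0 p x⟩)

end QuantileLoss

theorem sample_quantile_strong_consistency_general
    {M : Type*} [MetricSpace M] [ProperSpace M] [MeasurableSpace M] [BorelSpace M]
    {E : Type*} [NormedAddCommGroup E] [InnerProductSpace ℝ E]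
    {Ξ : Type*} (log : M → M → E) (dir : Ξ → M → E)
    (hlog : Continuous fun q : M × M => log q.1 q.2)
    (hnorm : ∀ p x : M, ‖log p x‖ = dist p x)
    (hdir : ∀ ξ' : Ξ, Continuous (dir ξ'))
    (hdirunit : ∀ (ξ' : Ξ) (p : M), ‖dir ξ' p‖ = 1)
    {Ω : Type*} [MeasurableSpace Ω] (P : Measure Ω)
    (μ : Measure M) [IsProbabilityMeasure μ]
    (X : ℕ → Ω → M) (hXmeas : ∀ i, Measurable (X i))
    (hident : ∀ i, P.map (X i) = μ)
    (hindep : ProbabilityTheory.iIndepFun X P)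
    (βs : ℝ) (hβs0 : 0 ≤ βs) (hβs1 : βs < 1) (ξs : Ξ) (ps : M)
    (hfin : Integrable (fun x => ‖log ps x‖ + ⟪βs • dir ξs ps, log ps x⟫) μ)
    (β : ℝ) (hβ0 : 0 ≤ β) (hβ1 : β < 1) (ξ : Ξ)
    (q : M)
    (hunique : ∀ p : M, p ≠ q →
      (∫ x, (‖log q x‖ + ⟪β • dir ξ q, log q x⟫) ∂μ) <
        ∫ x, (‖log p x‖ + ⟪β • dir ξ p, log p x⟫) ∂μ)
    (qhat : ℕ → Ω → M)
    (hqhatmin : ∀ (N : ℕ) (ω : Ω) (p : M),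
      (∑ i ∈ Finset.range N,
          (‖log (qhat N ω) (X i ω)‖ + ⟪β • dir ξ (qhat N ω), log (qhat N ω) (X i ω)⟫)) ≤
        ∑ i ∈ Finset.range N,
          (‖log p (X i ω)‖ + ⟪β • dir ξ p, log p (X i ω)⟫)) :
    ∀ᵐ ω ∂P, Tendsto (fun N : ℕ => qhat N ω) atTop (nhds q) := by
  have hdist : ∀ p, Integrable (dist p) μ :=
    integrable_dist_of_integrable_quantileLoss hnorm hdirunit hβs0 hβs1 hfin
  exact ae_tendsto_of_forall_sum_le hXmeas hident hindep (continuous_quantileLoss hlog (hdir ξ))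
    (quantileLoss_nonneg hnorm hdirunit hβ0 hβ1.le)
    (fun p => integrable_quantileLoss hnorm hdirunit hβ0 hlog (hdir ξ) (hdist p)) hunique
    (sub_pos.mpr hβ1) (fun p x => mul_dist_le_quantileLoss_add hnorm hdirunit hβ0 hβ1.le p q x)
    hqhatmin

/-- Let `M` be an Hadamard manifold (proper metric space with inverse
exponential map `log`, `‖log_p x‖ = d(p,x)`, contraction `‖log_p x − log_p x'‖ ≤ d(x,x')`,
joint continuity, continuous unit radial fields `dir ξ`), and `X₁, X₂, …` i.i.d.
`M`-valued with law `μ`, `E[ρ(X,p*;β*,ξ*)] < ∞` for some `(β*,ξ*,p*)`.  If `X₁` has a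
unique `(β,ξ)`-quantile `q` (the strict minimizer of `G(p) = E[ρ(X,p;β,ξ)]`), then any
measurable choice `q̂_N` from the sample `(β,ξ)`-quantile set
`argmin_p N⁻¹ Σ_{i<N} ρ(X_i,p;β,ξ)` converges almost surely to `q`. -/
theorem sample_quantile_strong_consistency
    {M : Type*} [MetricSpace M] [ProperSpace M] [MeasurableSpace M] [BorelSpace M]
    {E : Type*} [NormedAddCommGroup E] [InnerProductSpace ℝ E]
    {Ξ : Type*} (log : M → M → E) (dir : Ξ → M → E)
    (hlog : Continuous fun q : M × M => log q.1 q.2)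
    (hnorm : ∀ p x : M, ‖log p x‖ = dist p x)
    (hcontr : ∀ p x x' : M, ‖log p x - log p x'‖ ≤ dist x x')
    (hdir : ∀ ξ' : Ξ, Continuous (dir ξ'))
    (hdirunit : ∀ (ξ' : Ξ) (p : M), ‖dir ξ' p‖ = 1)
    {Ω : Type*} [MeasurableSpace Ω] (P : Measure Ω) [IsProbabilityMeasure P]
    (μ : Measure M) [IsProbabilityMeasure μ]
    (X : ℕ → Ω → M) (hXmeas : ∀ i, Measurable (X i))
    (hident : ∀ i, P.map (X i) = μ)
    (hindep : ProbabilityTheory.iIndepFun X P)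
    (βs : ℝ) (hβs0 : 0 ≤ βs) (hβs1 : βs < 1) (ξs : Ξ) (ps : M)
    (hfin : Integrable (fun x => ‖log ps x‖ + ⟪βs • dir ξs ps, log ps x⟫) μ)
    (β : ℝ) (hβ0 : 0 ≤ β) (hβ1 : β < 1) (ξ : Ξ)
    (q : M)
    (hunique : ∀ p : M, p ≠ q →
      (∫ x, (‖log q x‖ + ⟪β • dir ξ q, log q x⟫) ∂μ) <
        ∫ x, (‖log p x‖ + ⟪β • dir ξ p, log p x⟫) ∂μ)
    (qhat : ℕ → Ω → M) (hqhatmeas : ∀ N, Measurable (qhat N))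
    (hqhatmin : ∀ (N : ℕ) (ω : Ω) (p : M),
      (∑ i ∈ Finset.range N,
          (‖log (qhat N ω) (X i ω)‖ + ⟪β • dir ξ (qhat N ω), log (qhat N ω) (X i ω)⟫)) ≤
        ∑ i ∈ Finset.range N,
          (‖log p (X i ω)‖ + ⟪β • dir ξ p, log p (X i ω)⟫)) :
    ∀ᵐ ω ∂P, Tendsto (fun N : ℕ => qhat N ω) atTop (nhds q) :=
  sample_quantile_strong_consistency_general log dir hlog hnorm hdir hdirunit P μ X hXmeas hident
    hindep βs hβs0 hβs1 ξs ps hfin β hβ0 hβ1 ξ q hunique qhat hqhatmin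
end
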